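/- arXiv:2410.05136 — 2 statements merged into one kernel-verified Lean document; each statement's English description precedes it below -/
import Mathlib

section
/- Fix integers n ≥ T ≥ 1 and a filter f : Fin T → ℝ. Define the autocorrelations c_i := Σ_{k=0}^{T−1−i} f_k · f_{k+i} for 0 ≤ i ≤ T−1 (so c₀ = Σ_{k=0}^{T−1} f_k² = ‖f‖₂²), and for j ∈ {0, 1, …, n−1} define q_j := c₀ + 2·Σ_{i=1}^{T−1} c_i · cos(2π·j·i/n). Let σ_1 ≥ σ_2 ≥ … ≥ σ_n be the values q_0, …, q_{n−1} listed in non-increasing order. Then for every p with 1 ≤ p ≤ n, σ_1 − σ_p ≤ π · ‖f‖₂² · T² · p / n. -/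
/-! The top value σ₁ is `q j₀` for some frequency `j₀`. Of the `p` cyclically consecutive
frequencies `j₀ - ⌊p/2⌋, …, j₀ - ⌊p/2⌋ + p - 1` (mod `n`) at least one has value `≤ σₚ`, since only
`p - 1` sorted positions precede the `p`-th. Its distance to `j₀` modulo `n` is at most `p/2`, so,
`cos` being 1-Lipschitz and `|cᵢ| ≤ c₀` by AM–GM, the gap is at most
`2 ∑_{i<T} c₀ · 2π (p/2) i / n ≤ π c₀ T² p / n`. -/

open Finset Real

lemma cos_two_pi_mul_div_eq_of_modEq {n : ℕ} {a b : ℤ} (h : a ≡ b [ZMOD n]) (i : ℕ) :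
    cos (2 * π * a * i / n) = cos (2 * π * b * i / n) := by
  rcases eq_or_ne n 0 with rfl | hn
  · simp
  obtain ⟨t, ht⟩ := Int.modEq_iff_dvd.1 h
  have hb : (b : ℝ) = a + n * t := by exact_mod_cast (by linarith : b = a + n * t)
  rw [hb, show 2 * π * (a + n * t) * i / n = 2 * π * a * i / n + (t * i : ℤ) * (2 * π) by
    push_cast; field_simp, cos_add_int_mul_two_pi]

lemma abs_cos_two_pi_mul_div_sub_cos_le {n : ℕ} {a b d : ℤ} (h : a ≡ b + d [ZMOD n]) (i : ℕ) :
    |cos (2 * π * a * i / n) - cos (2 * π * b * i / n)| ≤ 2 * π * |(d : ℝ)| * i / n := by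
  rw [cos_two_pi_mul_div_eq_of_modEq h]
  calc _ ≤ |2 * π * ((b + d : ℤ) : ℝ) * i / n - 2 * π * b * i / n| := abs_cos_sub_cos_le _ _
    _ = 2 * π * |(d : ℝ)| * i / n := by
      push_cast
      rw [show 2 * π * (b + d : ℝ) * i / n - 2 * π * b * i / n = 2 * π * d * i / n by ring]
      simp [abs_mul, abs_div, abs_of_pos pi_pos]

lemma sum_mul_cos_sub_sum_mul_cos_le {n : ℕ} (s : Finset ℕ) {c : ℕ → ℝ} {B : ℝ}
    (hc : ∀ i ∈ s, |c i| ≤ B) {a b : ℕ} {d : ℤ} (h : (a : ℤ) ≡ b + d [ZMOD n]) :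
    ∑ i ∈ s, c i * cos (2 * π * a * i / n) - ∑ i ∈ s, c i * cos (2 * π * b * i / n) ≤
      2 * π * |(d : ℝ)| * B / n * ∑ i ∈ s, (i : ℝ) := by
  rw [← sum_sub_distrib, mul_sum]
  refine sum_le_sum fun i hi => ?_
  have hcos := abs_cos_two_pi_mul_div_sub_cos_le h i
  push_cast at hcos
  calc c i * cos (2 * π * a * i / n) - c i * cos (2 * π * b * i / n)
      ≤ |c i| * |cos (2 * π * a * i / n) - cos (2 * π * b * i / n)| := by
        rw [← abs_mul, mul_sub]; exact le_abs_self _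
    _ ≤ B * (2 * π * |(d : ℝ)| * i / n) :=
        mul_le_mul (hc i hi) hcos (abs_nonneg _) ((abs_nonneg _).trans (hc i hi))
    _ = 2 * π * |(d : ℝ)| * B / n * i := by ring

lemma abs_sum_mul_shift_le_sum_sq (F : ℕ → ℝ) (T i : ℕ) :
    |∑ k ∈ range (T - i), F k * F (k + i)| ≤ ∑ k ∈ range T, F k ^ 2 := by
  have hhead : ∑ k ∈ range (T - i), F k ^ 2 ≤ ∑ k ∈ range T, F k ^ 2 :=
    sum_le_sum_of_subset_of_nonneg (range_subset_range.2 (Nat.sub_le T i))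
      fun _ _ _ => sq_nonneg _
  have htail : ∑ k ∈ range (T - i), F (k + i) ^ 2 ≤ ∑ k ∈ range T, F k ^ 2 := by
    simp_rw [add_comm _ i, ← sum_Ico_eq_sum_range (fun k => F k ^ 2)]
    exact sum_le_sum_of_subset_of_nonneg (fun k hk => mem_range.2 (mem_Ico.1 hk).2)
      fun _ _ _ => sq_nonneg _
  calc |∑ k ∈ range (T - i), F k * F (k + i)|
      ≤ ∑ k ∈ range (T - i), |F k * F (k + i)| := abs_sum_le_sum_abs _ _
    _ ≤ ∑ k ∈ range (T - i), (F k ^ 2 + F (k + i) ^ 2) / 2 := by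
      refine sum_le_sum fun k _ => ?_
      have := two_mul_le_add_sq |F k| |F (k + i)|
      rw [sq_abs, sq_abs] at this
      rw [abs_mul]; linarith
    _ ≤ ∑ k ∈ range T, F k ^ 2 := by
      rw [← sum_div, sum_add_distrib]; linarith

lemma sum_Icc_one_le_sq_div_two (T : ℕ) : ∑ i ∈ Icc 1 (T - 1), (i : ℝ) ≤ T ^ 2 / 2 := by
  have hsub : ∑ i ∈ Icc 1 (T - 1), i ≤ ∑ i ∈ range T, i :=
    sum_le_sum_of_subset fun i hi => by simp only [mem_Icc, mem_range] at hi ⊢; omega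
  have hgauss : (∑ i ∈ range T, i) * 2 ≤ T ^ 2 := by
    rw [sum_range_id_mul_two, sq]; exact Nat.mul_le_mul_left _ (Nat.sub_le T 1)
  rw [le_div_iff₀ two_pos, ← Nat.cast_sum]
  exact_mod_cast (Nat.mul_le_mul_right 2 hsub).trans hgauss

lemma Antitone.exists_mem_le_of_lt_card {α : Type*} [Preorder α] {n : ℕ} {σ : Fin n → α}
    (hσ : Antitone σ) (k : Fin n) {S : Finset (Fin n)} (hS : (k : ℕ) < #S) :
    ∃ i ∈ S, σ i ≤ σ k := by
  by_contra! h
  have hsub : S ⊆ Iio k := fun i hi => mem_Iio.2 (lt_of_not_ge fun hki => h i hi (hσ hki))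
  have := card_le_card hsub
  rw [Fin.card_Iio] at this
  omega

lemma natCast_modEq_mod_add_sub (j k : ℕ) {m n : ℕ} (hm : m ≤ n) :
    (j : ℤ) ≡ ((j + (n - m) + k) % n : ℕ) + ((m : ℤ) - k) [ZMOD n] :=
  calc (j : ℤ) ≡ j + n [ZMOD n] := Int.add_modEq_right.symm
    _ = ((j + (n - m) + k : ℕ) : ℤ) + ((m : ℤ) - k) := by push_cast [hm]; ring
    _ ≡ _ [ZMOD n] := by push_cast; exact (Int.mod_modEq _ _).symm.add_right _

lemma abs_div_two_sub_le {p k : ℕ} (hk : k < p) :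
    |((((p / 2 : ℕ) : ℤ) - k : ℤ) : ℝ)| ≤ p / 2 := by
  have hupper : 2 * (((p / 2 : ℕ) : ℤ) - k) ≤ p := by omega
  have hlower : -(p : ℤ) ≤ 2 * (((p / 2 : ℕ) : ℤ) - k) := by omega
  rw [abs_le]
  constructor
  · have : -(p : ℝ) ≤ 2 * ((((p / 2 : ℕ) : ℤ) - k : ℤ) : ℝ) := by exact_mod_cast hlower
    linarith
  · have : 2 * ((((p / 2 : ℕ) : ℤ) - k : ℤ) : ℝ) ≤ p := by exact_mod_cast hupper
    linarith

lemma exists_lt_le_of_antitone_comp_equiv {α : Type*} [Preorder α] {n p : ℕ} {q : ℕ → α}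
    {σ : Fin n → α} (e : Fin n ≃ Fin n) (hσ : ∀ i, σ i = q (e i)) (hsort : Antitone σ)
    (hp1 : 1 ≤ p) (hpn : p ≤ n) (a : ℕ) :
    ∃ k < p, q ((a + k) % n) ≤ σ ⟨p - 1, (Nat.sub_lt hp1 one_pos).trans_le hpn⟩ := by
  have hn : 0 < n := by omega
  set g : ℕ → Fin n := fun k => e.symm ⟨(a + k) % n, Nat.mod_lt _ hn⟩ with hg
  have hinj : Set.InjOn g (range p) := by
    intro k hk k' hk' hkk'
    rw [coe_range, Set.mem_Iio] at hk hk'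
    have hmod : (a + k) % n = (a + k') % n := congrArg Fin.val (e.symm.injective hkk')
    have := Nat.ModEq.add_left_cancel' a hmod
    rwa [Nat.ModEq, Nat.mod_eq_of_lt (by omega), Nat.mod_eq_of_lt (by omega)] at this
  obtain ⟨i, hi, hle⟩ :=
    hsort.exists_mem_le_of_lt_card ⟨p - 1, (Nat.sub_lt hp1 one_pos).trans_le hpn⟩
      (S := (range p).image g)
      (by rw [card_image_of_injOn hinj, card_range]; exact Nat.sub_lt hp1 one_pos)
  obtain ⟨k, hk, rfl⟩ := mem_image.1 hi
  exact ⟨k, mem_range.1 hk, by simpa [hσ, hg] using hle⟩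

/-- **Lemma A.1.** For the squared singular values `q j = c₀ + 2 ∑_{i=1}^{T-1} cᵢ cos(2πji/n)`
of a single-channel circular convolution with filter `f` of length `T` on inputs of length `n`,
sorted non-increasingly as `σ₁ ≥ … ≥ σₙ`, one has `σ₁ − σₚ ≤ π ‖f‖₂² T² p / n`. -/
theorem conv_sq_singular_top_gap (n T : ℕ) (f : Fin T → ℝ)
    (F : ℕ → ℝ) (hF : ∀ m (h : m < T), F m = f ⟨m, h⟩)
    (c : ℕ → ℝ) (hc : ∀ i ≤ T - 1, c i = ∑ k ∈ Finset.range (T - i), F k * F (k + i))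
    (q : ℕ → ℝ)
    (hq : ∀ j, q j = c 0 + 2 * ∑ i ∈ Finset.Icc 1 (T - 1),
      c i * Real.cos (2 * π * j * i / n))
    (σ : Fin n → ℝ) (e : Fin n ≃ Fin n)
    (hσ : ∀ i : Fin n, σ i = q (e i)) (hsort : Antitone σ) :
    ∀ p : ℕ, ∀ _hp1 : 1 ≤ p, ∀ _hpn : p ≤ n,
      σ ⟨0, by omega⟩ - σ ⟨p - 1, by omega⟩ ≤
        π * (∑ k, f k ^ 2) * (T : ℝ) ^ 2 * p / n := by
  intro p hp1 hpn
  have hc0 : c 0 = ∑ k, f k ^ 2 := by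
    rw [hc 0 (Nat.zero_le _), Nat.sub_zero,
      ← Fin.sum_univ_eq_sum_range (fun k => F k * F (k + 0))]
    exact sum_congr rfl fun k _ => by rw [add_zero, hF k k.isLt, sq]
  have hcoef : ∀ i ∈ Icc 1 (T - 1), |c i| ≤ ∑ k, f k ^ 2 := fun i hi => by
    rw [hc i (mem_Icc.1 hi).2, ← hc0, hc 0 (Nat.zero_le _)]
    simpa [sq] using abs_sum_mul_shift_le_sum_sq F T i
  set j₀ : ℕ := (e ⟨0, by omega⟩ : ℕ)
  obtain ⟨k, hk, hqk⟩ :=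
    exists_lt_le_of_antitone_comp_equiv e hσ hsort hp1 hpn (j₀ + (n - p / 2))
  set j : ℕ := (j₀ + (n - p / 2) + k) % n
  have hcos := sum_mul_cos_sub_sum_mul_cos_le (Icc 1 (T - 1)) hcoef
    (natCast_modEq_mod_add_sub j₀ k (Nat.div_le_self p 2 |>.trans hpn))
  calc _ ≤ q j₀ - q j := by rw [hσ]; linarith
    _ = 2 * (∑ i ∈ Icc 1 (T - 1), c i * cos (2 * π * j₀ * i / n) -
          ∑ i ∈ Icc 1 (T - 1), c i * cos (2 * π * j * i / n)) := by rw [hq, hq]; ring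
    _ ≤ 2 * (2 * π * (p / 2) * (∑ k, f k ^ 2) / n * (T ^ 2 / 2)) := by
        grw [hcos, abs_div_two_sub_le hk, sum_Icc_one_le_sq_div_two]
    _ = π * (∑ k, f k ^ 2) * (T : ℝ) ^ 2 * p / n := by ring
end

section
/- Fix integers n ≥ T ≥ 1. Let f : Fin T → ℝ be a filter, let a : ZMod n → ℂ be its zero-padding (a(m) = f(m) for m < T and a(m) = 0 otherwise), and let A be the n × n circulant matrix with entries A_{jk} = a(j − k). For j ∈ ZMod n let w_j : ZMod n → ℂ be the normalized discrete Fourier vector w_j(k) = n^{−1/2} · exp(2πi · j·k / n) (indices taken via their representatives in {0,…,n−1}). Then for every j ∈ ZMod n, the squared Euclidean norm of the matrix-vector product satisfies ‖A · w_j‖₂² = c₀ + 2·Σ_{i=1}^{T−1} c_i · cos(2π·j·i/n), where c_i := Σ_{k=0}^{T−1−i} f_k · f_{k+i} for 0 ≤ i ≤ T−1. -/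
/-!
Each Fourier vector is `n^{-1/2}` times an additive character `ψ` of `ZMod n`, and every character
is an eigenvector of a circulant matrix, with eigenvalue `μ = ∑ₘ a(m) ψ(-m)`. As `|ψ| = 1`, this
gives `‖A w_j‖² = |μ|² = |∑_{p<T} f_p e^{-2πijp/n}|²`. Expanding the square yields
`∑_{p,q<T} f_p f_q cos(2πj(p-q)/n)`, and grouping the pairs `(p, q)` by their lag `|p - q|`
gives the autocorrelations `c_i`.
-/

open Finset Real

namespace Matrix

theorem circulant_mulVec_addChar {G R : Type*} [AddCommGroup G] [Fintype G] [CommRing R]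
    (v : G → R) (ψ : AddChar G R) :
    circulant v *ᵥ ψ = (∑ m, v m * ψ (-m)) • ⇑ψ := by
  ext k
  simp only [mulVec, dotProduct, circulant_apply, Pi.smul_apply, smul_eq_mul, sum_mul]
  refine Fintype.sum_equiv (Equiv.subLeft k) _ _ fun l => ?_
  rw [Equiv.subLeft_apply, mul_assoc, ← AddChar.map_add_eq_mul, neg_sub, sub_add_cancel]

end Matrix

namespace ZMod

theorem stdAddChar_mulShift_natCast {n : ℕ} [NeZero n] (j : ZMod n) (p : ℕ) :
    stdAddChar.mulShift j (p : ZMod n) = Complex.exp (2 * π * Complex.I * (j.val * p) / n) := by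
  have hcast : j * p = ((j.val * p : ℕ) : ZMod n) := by simp
  rw [AddChar.mulShift_apply, hcast, stdAddChar_apply, toCircle_natCast]
  push_cast
  rfl

theorem stdAddChar_mulShift_apply {n : ℕ} [NeZero n] (j k : ZMod n) :
    stdAddChar.mulShift j k = Complex.exp (2 * π * Complex.I * (j.val * k.val) / n) := by
  simpa using stdAddChar_mulShift_natCast j k.val

theorem sum_dite_val_lt_mul {M : Type*} [NonUnitalNonAssocSemiring M] {n T : ℕ} [NeZero n]
    (hT : T ≤ n) (x : Fin T → M) (g : ZMod n → M) :
    ∑ m : ZMod n, (if h : m.val < T then x ⟨m.val, h⟩ else 0) * g m =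
      ∑ p : Fin T, x p * g (p : ℕ) := by
  have hval : ∀ p : Fin T, ((p : ℕ) : ZMod n).val = p := fun p => val_cast_of_lt (p.2.trans_le hT)
  refine (Fintype.sum_of_injective (fun p : Fin T => ((p : ℕ) : ZMod n)) ?_ _ _ ?_ ?_).symm
  · intro p q hpq
    exact Fin.ext (by simpa only [hval] using congrArg val hpq)
  · intro m hm
    rw [dif_neg, zero_mul]
    intro h
    exact hm ⟨⟨m.val, h⟩, natCast_zmod_val m⟩
  · intro p
    simp only [hval, p.2, dif_pos]

end ZMod

namespace Complex

theorem sq_norm_sum_ofReal_mul_exp {ι : Type*} (s : Finset ι) (x θ : ι → ℝ) :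
    ‖∑ p ∈ s, (x p : ℂ) * exp (θ p * I)‖ ^ 2 =
      ∑ p ∈ s, ∑ q ∈ s, x p * x q * Real.cos (θ p - θ q) := by
  rw [Complex.sq_norm, ← ofReal_re (normSq _), ← mul_conj, map_sum, sum_mul_sum, re_sum]
  refine sum_congr rfl fun p _ => ?_
  rw [re_sum]
  refine sum_congr rfl fun q _ => ?_
  have hterm : (x p : ℂ) * exp (θ p * I) * (starRingEnd ℂ) ((x q : ℂ) * exp (θ q * I)) =
      ((x p * x q : ℝ) : ℂ) * exp ((θ p - θ q : ℝ) * I) := by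
    rw [map_mul, conj_ofReal, ← exp_conj, map_mul, conj_ofReal, conj_I, mul_mul_mul_comm,
      ← exp_add]
    push_cast
    ring_nf
  rw [hterm, re_ofReal_mul, exp_ofReal_mul_I_re]

end Complex

theorem Finset.sum_range_sum_range_of_symm {M : Type*} [AddCommMonoid M] (h : ℕ → ℕ → M)
    (hh : ∀ p q, h p q = h q p) (T : ℕ) :
    ∑ p ∈ range T, ∑ q ∈ range T, h p q =
      ∑ p ∈ range T, h p p + 2 • ∑ q ∈ range T, ∑ p ∈ range q, h p q := by
  induction T with
  | zero => simp
  | succ T ih =>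
    simp only [sum_range_succ, sum_add_distrib, ih, smul_add, two_nsmul, hh T]
    abel

theorem Finset.sum_range_sum_range_lt_eq_sum_Icc {M : Type*} [AddCommMonoid M] (h : ℕ → ℕ → M)
    (T : ℕ) :
    ∑ q ∈ range T, ∑ p ∈ range q, h p q =
      ∑ i ∈ Icc 1 (T - 1), ∑ k ∈ range (T - i), h k (k + i) := by
  rw [sum_sigma', sum_sigma']
  refine sum_nbij' (fun x ↦ ⟨x.1 - x.2, x.2⟩) (fun x ↦ ⟨x.2 + x.1, x.2⟩) ?_ ?_ ?_ ?_ ?_ <;>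
    simp only [mem_sigma, mem_range, mem_Icc, Sigma.forall, Sigma.mk.injEq, heq_eq_eq,
      and_true]
  · omega
  · omega
  · omega
  · omega
  · intro q p hpq
    rw [Nat.add_sub_cancel' hpq.2.le]

theorem sum_range_sum_range_mul_cos_sub (F : ℕ → ℝ) (α : ℝ) (T : ℕ) :
    ∑ p ∈ range T, ∑ q ∈ range T, F p * F q * cos (α * p - α * q) =
      ∑ k ∈ range T, F k * F k +
        2 * ∑ i ∈ Icc 1 (T - 1), (∑ k ∈ range (T - i), F k * F (k + i)) * cos (α * i) := by
  have hsymm (p q : ℕ) : F p * F q * cos (α * p - α * q) = F q * F p * cos (α * q - α * p) := by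
    rw [mul_comm (F p), ← cos_neg, neg_sub]
  rw [sum_range_sum_range_of_symm _ hsymm, sum_range_sum_range_lt_eq_sum_Icc, nsmul_eq_mul,
    Nat.cast_ofNat]
  simp only [sub_self, cos_zero, mul_one, sum_mul]
  congr 2
  refine sum_congr rfl fun i _ => sum_congr rfl fun k _ => ?_
  rw [← cos_neg]
  push_cast
  ring_nf

theorem circulant_mulVec_fourier_sq_norm_general (n T : ℕ) [NeZero n] (hn : T ≤ n)
    (f : Fin T → ℝ)
    (F : ℕ → ℝ) (hF : ∀ m (h : m < T), F m = f ⟨m, h⟩)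
    (c : ℕ → ℝ) (hc : ∀ i ≤ T - 1, c i = ∑ k ∈ Finset.range (T - i), F k * F (k + i))
    (a : ZMod n → ℂ)
    (ha : ∀ m : ZMod n, a m = if h : m.val < T then (f ⟨m.val, h⟩ : ℂ) else 0)
    (A : Matrix (ZMod n) (ZMod n) ℂ) (hA : ∀ j k : ZMod n, A j k = a (j - k))
    (w : ZMod n → ZMod n → ℂ)
    (hw : ∀ j k : ZMod n, w j k =
      (Real.sqrt n : ℂ)⁻¹ * Complex.exp (2 * π * Complex.I * (j.val * k.val) / n)) :
    ∀ j : ZMod n,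
      ∑ k, ‖A.mulVec (w j) k‖ ^ 2 =
        c 0 + 2 * ∑ i ∈ Finset.Icc 1 (T - 1),
          c i * Real.cos (2 * π * j.val * i / n) := by
  intro j
  have hw_eq : w j = ((√n : ℝ) : ℂ)⁻¹ • ⇑(ZMod.stdAddChar.mulShift j) := by
    ext k
    rw [hw, Pi.smul_apply, smul_eq_mul, ZMod.stdAddChar_mulShift_apply]
  have hnorm : ∑ k, ‖A.mulVec (w j) k‖ ^ 2 =
      ‖∑ m, a m * ZMod.stdAddChar.mulShift j (-m)‖ ^ 2 := by
    have hA_eq : A = Matrix.circulant a := Matrix.ext hA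
    rw [hA_eq, hw_eq, Matrix.mulVec_smul, Matrix.circulant_mulVec_addChar]
    simp only [Pi.smul_apply, smul_eq_mul, norm_mul, AddChar.norm_apply, norm_inv,
      Complex.norm_real, mul_one, mul_pow, sum_const, card_univ, ZMod.card, nsmul_eq_mul]
    rw [Real.norm_of_nonneg (sqrt_nonneg _), inv_pow, sq_sqrt (Nat.cast_nonneg _),
      mul_inv_cancel_left₀ (Nat.cast_ne_zero.2 (NeZero.ne n))]
  set α : ℝ := -(2 * π * j.val / n) with hα
  have heig : ∑ m, a m * ZMod.stdAddChar.mulShift j (-m) =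
      ∑ p ∈ range T, (F p : ℂ) * Complex.exp ((α * p : ℝ) * Complex.I) := by
    simp only [ha]
    rw [ZMod.sum_dite_val_lt_mul hn (fun p => (f p : ℂ)), ← Fin.sum_univ_eq_sum_range]
    refine sum_congr rfl fun p _ => ?_
    rw [hF p p.2, AddChar.map_neg_eq_inv, ZMod.stdAddChar_mulShift_natCast, ← Complex.exp_neg]
    congr 2
    push_cast [hα]
    ring
  rw [hnorm, heig, Complex.sq_norm_sum_ofReal_mul_exp, sum_range_sum_range_mul_cos_sub,
    hc 0 (Nat.zero_le _), Nat.sub_zero]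
  simp only [add_zero]
  congr 2
  refine sum_congr rfl fun i hi => ?_
  rw [hc i (mem_Icc.1 hi).2, hα, neg_mul, cos_neg, div_mul_eq_mul_div]

/-- **Squared-singular-value formula.** For the circulant matrix `A` of the zero-padded filter
`f` (length `T`, input length `n`) and the normalized Fourier vector `w j`, the squared Euclidean
norm of `A · w j` equals `c₀ + 2 ∑_{i=1}^{T-1} cᵢ cos(2πji/n)`, where `cᵢ` are the
autocorrelations of `f`. -/
theorem circulant_mulVec_fourier_sq_norm (n T : ℕ) [NeZero n] (hT : 1 ≤ T) (hn : T ≤ n)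
    (f : Fin T → ℝ)
    (F : ℕ → ℝ) (hF : ∀ m (h : m < T), F m = f ⟨m, h⟩) (hF0 : ∀ m, T ≤ m → F m = 0)
    (c : ℕ → ℝ) (hc : ∀ i ≤ T - 1, c i = ∑ k ∈ Finset.range (T - i), F k * F (k + i))
    (a : ZMod n → ℂ)
    (ha : ∀ m : ZMod n, a m = if h : m.val < T then (f ⟨m.val, h⟩ : ℂ) else 0)
    (A : Matrix (ZMod n) (ZMod n) ℂ) (hA : ∀ j k : ZMod n, A j k = a (j - k))
    (w : ZMod n → ZMod n → ℂ)
    (hw : ∀ j k : ZMod n, w j k =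
      (Real.sqrt n : ℂ)⁻¹ * Complex.exp (2 * π * Complex.I * (j.val * k.val) / n)) :
    ∀ j : ZMod n,
      ∑ k, ‖A.mulVec (w j) k‖ ^ 2 =
        c 0 + 2 * ∑ i ∈ Finset.Icc 1 (T - 1),
          c i * Real.cos (2 * π * j.val * i / n) :=
  circulant_mulVec_fourier_sq_norm_general n T hn f F hF c hc a ha A hA w hw
end
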